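/- arXiv:2307.09864 — 2 statements merged into one kernel-verified Lean document; each statement's English description precedes it below -/
import Mathlib

section
/- Let r ≥ 1 be fixed, let Σ_Λ and Γ^F be r × r real symmetric positive definite matrices, and for each integer n > r let Λ_n be a real n × r matrix and let Γ^ξ_n be a real symmetric positive semidefinite n × n matrix. Assume lim_{n→∞} ‖ (Λ_nᵀ Λ_n)/n − Σ_Λ ‖ = 0 and sup_n ‖Γ^ξ_n‖ ≤ M for some M > 0, where ‖·‖ is the spectral norm. Set Γ^x_n = Λ_n Γ^F Λ_nᵀ + Γ^ξ_n. Then for every j ∈ {1,…,r}: liminf_{n→∞} μ_j(Γ^x_n)/n ≥ μ_r(Σ_Λ) · μ_j(Γ^F) > 0 and limsup_{n→∞} μ_j(Γ^x_n)/n ≤ μ_j(Σ_Λ) · μ_1(Γ^F) < ∞; moreover μ_{r+1}(Γ^x_n) ≤ M for every n > r, where μ_j(A) denotes the j-th largest eigenvalue of a real symmetric matrix A. -/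
open Matrix Filter

/-- The spectral (operator) norm of a real matrix. -/
noncomputable def specNorm {m n : ℕ} (A : Matrix (Fin m) (Fin n) ℝ) : ℝ :=
  ‖LinearMap.toContinuousLinearMap (Matrix.toEuclideanLin A)‖

/-- `muNth A j` is the `j`-th largest eigenvalue (1-indexed, counted with multiplicity)
of a real symmetric matrix `A`. -/
noncomputable def muNth {n : ℕ} (A : Matrix (Fin n) (Fin n) ℝ) (j : ℕ) : ℝ :=
  (if hA : A.IsHermitian then
    (List.ofFn hA.eigenvalues).mergeSort (fun a b => decide (b ≤ a))
  else []).getD (j - 1) 0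

/-!
By Courant–Fischer, every bound on `μ_j` follows from a comparison of quadratic forms. Write
`Γ^F = BᵀB` and `C = ΛBᵀ`, so that `ΛΓ^FΛᵀ = CCᵀ`. Since `CCᵀ` and `CᵀC = B(ΛᵀΛ)Bᵀ` share their
`r` largest eigenvalues, `μ_j(ΛΓ^FΛᵀ) ≥ μ_r(ΛᵀΛ) μ_j(BBᵀ) = μ_r(ΛᵀΛ) μ_j(Γ^F)`. In the other
direction `ΛΓ^FΛᵀ ≤ μ_1(Γ^F) ΛΛᵀ` gives
`μ_j(ΛΓ^FΛᵀ) ≤ μ_1(Γ^F) μ_j(ΛΛᵀ) = μ_1(Γ^F) μ_j(ΛᵀΛ)`, and `CCᵀ` has rank at most `r`, so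
`μ_{r+1}(ΛΓ^FΛᵀ) ≤ 0`. Adding `Γ^ξ ≥ 0` raises each eigenvalue by at most `‖Γ^ξ‖ ≤ M`
(Weyl), and Weyl's inequality also gives `μ_k(ΛᵀΛ)/n → μ_k(Σ_Λ)`.
-/

open Module
open scoped RealInnerProductSpace

lemma LinearMap.finrank_map_eq_of_disjoint_ker {R M N : Type*} [Ring R] [AddCommGroup M]
    [Module R M] [AddCommGroup N] [Module R N] (f : M →ₗ[R] N) {V : Submodule R M}
    (h : Disjoint V (LinearMap.ker f)) : finrank R (V.map f) = finrank R V := by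
  rw [← LinearMap.range_domRestrict,
    LinearMap.finrank_range_of_inj (LinearMap.injective_domRestrict_iff.mpr h)]

lemma Submodule.exists_mem_inf_ne_zero_of_lt_finrank_add {K V : Type*} [DivisionRing K]
    [AddCommGroup V] [Module K V] [FiniteDimensional K V] {V₁ V₂ : Submodule K V}
    (h : finrank K V < finrank K V₁ + finrank K V₂) : ∃ x ∈ V₁ ⊓ V₂, x ≠ 0 := by
  by_contra! hV
  exact h.not_ge (Submodule.finrank_add_finrank_le_of_disjoint
    (Submodule.disjoint_def.mpr fun x h₁ h₂ => hV x ⟨h₁, h₂⟩))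

variable {E : Type*} [NormedAddCommGroup E] [InnerProductSpace ℝ E] [FiniteDimensional ℝ E]

lemma exists_finrank_forall_inner_eq_zero {ι : Type*} (v : ι → E) (s : Finset ι) :
    ∃ W : Submodule ℝ E,
      finrank ℝ E - s.card ≤ finrank ℝ W ∧ ∀ x ∈ W, ∀ i ∈ s, ⟪v i, x⟫ = 0 := by
  let φ : E →ₗ[ℝ] (s → ℝ) := LinearMap.pi fun i => innerₛₗ ℝ (v i)
  refine ⟨LinearMap.ker φ, ?_, fun x hx i hi => congr_fun hx ⟨i, hi⟩⟩
  have hrank := φ.finrank_range_add_finrank_ker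
  have hrange := (LinearMap.range φ).finrank_le
  rw [Module.finrank_fintype_fun_eq_card, Fintype.card_coe] at hrange
  omega

namespace LinearMap.IsSymmetric

variable {T : E →ₗ[ℝ] E} (hT : T.IsSymmetric) {n : ℕ} (hn : finrank ℝ E = n)

lemma inner_apply_self_eq_sum (x : E) :
    ⟪T x, x⟫ = ∑ i, hT.eigenvalues hn i * ⟪hT.eigenvectorBasis hn i, x⟫ ^ 2 := by
  rw [← (hT.eigenvectorBasis hn).sum_inner_mul_inner]
  refine Finset.sum_congr rfl fun i _ => ?_
  rw [real_inner_comm, ← hT, apply_eigenvectorBasis, real_inner_smul_left,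
    RCLike.ofReal_real_eq_id, id_eq]
  ring

lemma inner_apply_self_le_of_forall_lt (j : Fin n) {x : E}
    (hx : ∀ i < j, ⟪hT.eigenvectorBasis hn i, x⟫ = 0) :
    ⟪T x, x⟫ ≤ hT.eigenvalues hn j * ‖x‖ ^ 2 := by
  rw [hT.inner_apply_self_eq_sum hn, ← (hT.eigenvectorBasis hn).sum_sq_inner_right,
    Finset.mul_sum]
  refine Finset.sum_le_sum fun i _ => ?_
  rcases lt_or_ge i j with hij | hji
  · simp [hx i hij]
  · exact mul_le_mul_of_nonneg_right (hT.eigenvalues_antitone hn hji) (sq_nonneg _)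

lemma le_inner_apply_self_of_forall_gt (j : Fin n) {x : E}
    (hx : ∀ i > j, ⟪hT.eigenvectorBasis hn i, x⟫ = 0) :
    hT.eigenvalues hn j * ‖x‖ ^ 2 ≤ ⟪T x, x⟫ := by
  rw [hT.inner_apply_self_eq_sum hn, ← (hT.eigenvectorBasis hn).sum_sq_inner_right,
    Finset.mul_sum]
  refine Finset.sum_le_sum fun i _ => ?_
  rcases le_or_gt i j with hij | hji
  · exact mul_le_mul_of_nonneg_right (hT.eigenvalues_antitone hn hij) (sq_nonneg _)
  · simp [hx i hji]

lemma exists_finrank_forall_inner_apply_self_le (j : Fin n) :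
    ∃ W : Submodule ℝ E, n - j ≤ finrank ℝ W ∧
      ∀ x ∈ W, ⟪T x, x⟫ ≤ hT.eigenvalues hn j * ‖x‖ ^ 2 := by
  obtain ⟨W, hW, hWx⟩ :=
    exists_finrank_forall_inner_eq_zero (hT.eigenvectorBasis hn) (Finset.Iio j)
  refine ⟨W, by rwa [Fin.card_Iio, hn] at hW, fun x hx => ?_⟩
  exact hT.inner_apply_self_le_of_forall_lt hn j fun i hi => hWx x hx i (Finset.mem_Iio.mpr hi)

lemma exists_finrank_forall_le_inner_apply_self (j : Fin n) :
    ∃ V : Submodule ℝ E, j + 1 ≤ finrank ℝ V ∧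
      ∀ x ∈ V, hT.eigenvalues hn j * ‖x‖ ^ 2 ≤ ⟪T x, x⟫ := by
  obtain ⟨V, hV, hVx⟩ :=
    exists_finrank_forall_inner_eq_zero (hT.eigenvectorBasis hn) (Finset.Ioi j)
  refine ⟨V, by rw [Fin.card_Ioi, hn] at hV; omega, fun x hx => ?_⟩
  exact hT.le_inner_apply_self_of_forall_gt hn j fun i hi => hVx x hx i (Finset.mem_Ioi.mpr hi)

theorem le_eigenvalues_of_forall (j : Fin n) {V : Submodule ℝ E} (hV : j + 1 ≤ finrank ℝ V)
    {m : ℝ} (hm : ∀ x ∈ V, m * ‖x‖ ^ 2 ≤ ⟪T x, x⟫) : m ≤ hT.eigenvalues hn j := by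
  obtain ⟨W, hW, hWx⟩ := hT.exists_finrank_forall_inner_apply_self_le hn j
  obtain ⟨x, ⟨hxV, hxW⟩, hx⟩ :=
    Submodule.exists_mem_inf_ne_zero_of_lt_finrank_add (V₁ := V) (V₂ := W) (by omega)
  exact le_of_mul_le_mul_right ((hm x hxV).trans (hWx x hxW)) (by positivity)

theorem eigenvalues_le_of_forall (j : Fin n) {W : Submodule ℝ E} (hW : n - j ≤ finrank ℝ W)
    {m : ℝ} (hm : ∀ x ∈ W, ⟪T x, x⟫ ≤ m * ‖x‖ ^ 2) : hT.eigenvalues hn j ≤ m := by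
  obtain ⟨V, hV, hVx⟩ := hT.exists_finrank_forall_le_inner_apply_self hn j
  obtain ⟨x, ⟨hxV, hxW⟩, hx⟩ :=
    Submodule.exists_mem_inf_ne_zero_of_lt_finrank_add (V₁ := V) (V₂ := W) (by omega)
  exact le_of_mul_le_mul_right ((hVx x hxV).trans (hm x hxW)) (by positivity)

theorem eigenvalues_le_of_inner_le {S : E →ₗ[ℝ] E} (hS : S.IsSymmetric) {c d : ℝ}
    (hc : 0 ≤ c) (h : ∀ x, ⟪S x, x⟫ ≤ c * ⟪T x, x⟫ + d * ‖x‖ ^ 2) (j : Fin n) :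
    hS.eigenvalues hn j ≤ c * hT.eigenvalues hn j + d := by
  obtain ⟨W, hW, hWx⟩ := hT.exists_finrank_forall_inner_apply_self_le hn j
  refine hS.eigenvalues_le_of_forall hn j hW fun x hx => ?_
  nlinarith [h x, hWx x hx]

theorem le_eigenvalues_of_le_inner {S : E →ₗ[ℝ] E} (hS : S.IsSymmetric) {c d : ℝ}
    (hc : 0 ≤ c) (h : ∀ x, c * ⟪T x, x⟫ + d * ‖x‖ ^ 2 ≤ ⟪S x, x⟫) (j : Fin n) :
    c * hT.eigenvalues hn j + d ≤ hS.eigenvalues hn j := by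
  obtain ⟨V, hV, hVx⟩ := hT.exists_finrank_forall_le_inner_apply_self hn j
  refine hS.le_eigenvalues_of_forall hn j hV fun x hx => ?_
  nlinarith [h x, hVx x hx]

end LinearMap.IsSymmetric

namespace LinearMap

variable {F : Type*} [NormedAddCommGroup F] [InnerProductSpace ℝ F] [FiniteDimensional ℝ F]
  (T : E →ₗ[ℝ] F) {r m : ℕ}

theorem eigenvalues_adjoint_comp_self_le (hr : finrank ℝ E = r) (hm : finrank ℝ F = m) (j : ℕ)
    (hjr : j < r) (hjm : j < m) :
    T.isSymmetric_adjoint_comp_self.eigenvalues hr ⟨j, hjr⟩ ≤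
      T.isSymmetric_self_comp_adjoint.eigenvalues hm ⟨j, hjm⟩ := by
  obtain ⟨V, hV, hVx⟩ :=
    T.isSymmetric_adjoint_comp_self.exists_finrank_forall_le_inner_apply_self hr ⟨j, hjr⟩
  set t := T.isSymmetric_adjoint_comp_self.eigenvalues hr ⟨j, hjr⟩
  rcases le_or_gt t 0 with ht | ht
  · exact ht.trans (T.isPositive_self_comp_adjoint.nonneg_eigenvalues hm _)
  have hnormT (x : E) : ⟪(adjoint T ∘ₗ T) x, x⟫ = ‖T x‖ ^ 2 := by
    rw [comp_apply, adjoint_inner_left, real_inner_self_eq_norm_sq]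
  simp only [hnormT] at hVx
  have hVker : Disjoint V (ker T) := Submodule.disjoint_def.mpr fun x hxV hxT => by
    have := hVx x hxV
    rw [mem_ker.mp hxT, norm_zero, zero_pow two_ne_zero, mul_nonpos_iff_pos_imp_nonpos] at this
    simpa using this.1 ht
  refine T.isSymmetric_self_comp_adjoint.le_eigenvalues_of_forall hm ⟨j, hjm⟩
    (by rwa [finrank_map_eq_of_disjoint_ker T hVker]) ?_
  rintro _ ⟨x, hx, rfl⟩
  rw [comp_apply, ← adjoint_inner_right, real_inner_self_eq_norm_sq]
  have hcs : ‖T x‖ ^ 2 ≤ ‖adjoint T (T x)‖ * ‖x‖ := hnormT x ▸ real_inner_le_norm _ _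
  have hts : t * ‖x‖ ≤ ‖adjoint T (T x)‖ := by
    rcases (norm_nonneg x).eq_or_lt with hx0 | hx0
    · rw [← hx0, mul_zero]
      exact norm_nonneg _
    · exact le_of_mul_le_mul_right (by nlinarith [hVx x hx]) hx0
  calc t * ‖T x‖ ^ 2 ≤ t * (‖adjoint T (T x)‖ * ‖x‖) := by gcongr
    _ = ‖adjoint T (T x)‖ * (t * ‖x‖) := by ring
    _ ≤ ‖adjoint T (T x)‖ ^ 2 := by rw [sq]; gcongr

theorem eigenvalues_self_comp_adjoint_nonpos (hr : finrank ℝ E = r) (hm : finrank ℝ F = m)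
    (j : Fin m) (hj : r ≤ j) :
    T.isSymmetric_self_comp_adjoint.eigenvalues hm j ≤ 0 := by
  refine T.isSymmetric_self_comp_adjoint.eigenvalues_le_of_forall hm j
    (W := ker (adjoint T)) ?_ fun y hy => ?_
  · have hrank := (adjoint T).finrank_range_add_finrank_ker
    have hrange := (range (adjoint T)).finrank_le
    omega
  · rw [comp_apply, mem_ker.mp hy, map_zero, inner_zero_left, zero_mul]

end LinearMap

namespace Matrix

variable {m n : ℕ}

lemma inner_toEuclideanLin_self (A : Matrix (Fin n) (Fin n) ℝ) (x : EuclideanSpace ℝ (Fin n)) :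
    ⟪toEuclideanLin A x, x⟫ = x.ofLp ⬝ᵥ A *ᵥ x.ofLp := by
  simp [EuclideanSpace.inner_eq_star_dotProduct, toLpLin_apply]

lemma _root_.EuclideanSpace.norm_sq_eq_dotProduct (x : EuclideanSpace ℝ (Fin n)) :
    ‖x‖ ^ 2 = x.ofLp ⬝ᵥ x.ofLp := by
  rw [EuclideanSpace.norm_sq_eq]
  simp [dotProduct, sq]

lemma toEuclideanLin_transpose_mul_self (C : Matrix (Fin m) (Fin n) ℝ) :
    toEuclideanLin (Cᵀ * C) = LinearMap.adjoint (toEuclideanLin C) ∘ₗ toEuclideanLin C := by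
  rw [← conjTranspose_eq_transpose_of_trivial, ← toEuclideanLin_conjTranspose_eq_adjoint]
  exact toLpLin_mul_same 2 _ _

lemma toEuclideanLin_mul_transpose_self (C : Matrix (Fin m) (Fin n) ℝ) :
    toEuclideanLin (C * Cᵀ) = toEuclideanLin C ∘ₗ LinearMap.adjoint (toEuclideanLin C) := by
  rw [← conjTranspose_eq_transpose_of_trivial, ← toEuclideanLin_conjTranspose_eq_adjoint]
  exact toLpLin_mul_same 2 _ _

lemma charpoly_toEuclideanLin (A : Matrix (Fin n) (Fin n) ℝ) :
    (toEuclideanLin A).charpoly = A.charpoly :=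
  charpoly_toLin A (PiLp.basisFun 2 ℝ (Fin n))

end Matrix

section muNth

variable {n : ℕ}

lemma abs_dotProduct_mulVec_le_specNorm (A : Matrix (Fin n) (Fin n) ℝ) (x : Fin n → ℝ) :
    |x ⬝ᵥ A *ᵥ x| ≤ specNorm A * (x ⬝ᵥ x) := by
  set y : EuclideanSpace ℝ (Fin n) := WithLp.toLp 2 x
  have := (abs_real_inner_le_norm (toEuclideanLin A y) y).trans
    (mul_le_mul_of_nonneg_right ((toEuclideanLin A).toContinuousLinearMap.le_opNorm y)
      (norm_nonneg y))
  rwa [mul_assoc, ← sq, inner_toEuclideanLin_self, EuclideanSpace.norm_sq_eq_dotProduct] at this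

theorem muNth_succ_eq_eigenvalues {A : Matrix (Fin n) (Fin n) ℝ}
    {T : EuclideanSpace ℝ (Fin n) →ₗ[ℝ] EuclideanSpace ℝ (Fin n)} (hT : T.IsSymmetric)
    (hAT : toEuclideanLin A = T) (j : Fin n) :
    muNth A (j + 1) = hT.eigenvalues finrank_euclideanSpace_fin j := by
  subst hAT
  have hA : A.IsHermitian := isSymmetric_toEuclideanLin_iff.mp hT
  have hsort : (List.ofFn hA.eigenvalues).mergeSort (fun a b => decide (b ≤ a)) =
      List.ofFn (hT.eigenvalues finrank_euclideanSpace_fin) := by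
    rw [← LinearMap.IsSymmetric.sort_roots_charpoly_eq_eigenvalues, charpoly_toEuclideanLin,
      hA.roots_charpoly_eq_eigenvalues, Fin.univ_val_map, Multiset.map_coe, List.map_ofFn]
    simp [Function.comp_def, Multiset.coe_sort]
  rw [muNth, dif_pos hA, hsort]
  simp

theorem muNth_le_of_dotProduct_le {A B : Matrix (Fin n) (Fin n) ℝ} (hA : A.IsHermitian)
    (hB : B.IsHermitian) {c d : ℝ} (hc : 0 ≤ c)
    (h : ∀ x, x ⬝ᵥ B *ᵥ x ≤ c * (x ⬝ᵥ A *ᵥ x) + d * (x ⬝ᵥ x)) (j : Fin n) :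
    muNth B (j + 1) ≤ c * muNth A (j + 1) + d := by
  have hA' := isSymmetric_toEuclideanLin_iff.mpr hA
  have hB' := isSymmetric_toEuclideanLin_iff.mpr hB
  rw [muNth_succ_eq_eigenvalues hA' rfl, muNth_succ_eq_eigenvalues hB' rfl]
  refine hA'.eigenvalues_le_of_inner_le _ hB' hc (fun x => ?_) j
  simpa only [inner_toEuclideanLin_self, EuclideanSpace.norm_sq_eq_dotProduct] using h x.ofLp

theorem le_muNth_of_le_dotProduct {A B : Matrix (Fin n) (Fin n) ℝ} (hA : A.IsHermitian)
    (hB : B.IsHermitian) {c d : ℝ} (hc : 0 ≤ c)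
    (h : ∀ x, c * (x ⬝ᵥ A *ᵥ x) + d * (x ⬝ᵥ x) ≤ x ⬝ᵥ B *ᵥ x) (j : Fin n) :
    c * muNth A (j + 1) + d ≤ muNth B (j + 1) := by
  have hA' := isSymmetric_toEuclideanLin_iff.mpr hA
  have hB' := isSymmetric_toEuclideanLin_iff.mpr hB
  rw [muNth_succ_eq_eigenvalues hA' rfl, muNth_succ_eq_eigenvalues hB' rfl]
  refine hA'.le_eigenvalues_of_le_inner _ hB' hc (fun x => ?_) j
  simpa only [inner_toEuclideanLin_self, EuclideanSpace.norm_sq_eq_dotProduct] using h x.ofLp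

theorem exists_mulVec_eq_muNth_smul {A : Matrix (Fin n) (Fin n) ℝ} (hA : A.IsHermitian)
    (j : Fin n) : ∃ v ≠ 0, A *ᵥ v = muNth A (j + 1) • v := by
  have hT := isSymmetric_toEuclideanLin_iff.mpr hA
  set b := hT.eigenvectorBasis finrank_euclideanSpace_fin
  refine ⟨(b j).ofLp, (WithLp.ofLp_eq_zero 2).ne.mpr (b.orthonormal.ne_zero j), ?_⟩
  rw [muNth_succ_eq_eigenvalues hT rfl]
  have := congr_arg WithLp.ofLp (hT.apply_eigenvectorBasis finrank_euclideanSpace_fin j)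
  rwa [toLpLin_apply] at this

theorem muNth_nonneg_of_posSemidef {A : Matrix (Fin n) (Fin n) ℝ} (hA : A.PosSemidef)
    (j : Fin n) : 0 ≤ muNth A (j + 1) := by
  obtain ⟨v, hv, hAv⟩ := exists_mulVec_eq_muNth_smul hA.isHermitian j
  have := hA.dotProduct_mulVec_nonneg v
  rw [hAv, dotProduct_smul, smul_eq_mul] at this
  exact nonneg_of_mul_nonneg_left this (dotProduct_star_self_pos_iff.mpr hv)

theorem muNth_pos_of_posDef {A : Matrix (Fin n) (Fin n) ℝ} (hA : A.PosDef) (j : Fin n) :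
    0 < muNth A (j + 1) := by
  obtain ⟨v, hv, hAv⟩ := exists_mulVec_eq_muNth_smul hA.isHermitian j
  have := hA.dotProduct_mulVec_pos hv
  rw [hAv, dotProduct_smul, smul_eq_mul] at this
  exact pos_of_mul_pos_left this (dotProduct_star_self_nonneg v)

theorem muNth_smul {A : Matrix (Fin n) (Fin n) ℝ} (hA : A.IsHermitian) {c : ℝ} (hc : 0 ≤ c)
    (j : Fin n) : muNth (c • A) (j + 1) = c * muNth A (j + 1) := by
  have hcA : (c • A).IsHermitian := hA.smul (IsSelfAdjoint.all c)
  refine le_antisymm ?_ ?_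
  · simpa using muNth_le_of_dotProduct_le hA hcA hc (d := 0) (by simp [smul_mulVec]) j
  · simpa using le_muNth_of_le_dotProduct hA hcA hc (d := 0) (by simp [smul_mulVec]) j

theorem abs_muNth_sub_le_specNorm {A B : Matrix (Fin n) (Fin n) ℝ} (hA : A.IsHermitian)
    (hB : B.IsHermitian) (j : Fin n) :
    |muNth A (j + 1) - muNth B (j + 1)| ≤ specNorm (A - B) := by
  have hAB (x : Fin n → ℝ) := abs_le.mp (abs_dotProduct_mulVec_le_specNorm (A - B) x)
  simp only [sub_mulVec, dotProduct_sub] at hAB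
  rw [abs_sub_le_iff]
  constructor
  · linarith [muNth_le_of_dotProduct_le hB hA zero_le_one
      (d := specNorm (A - B)) (fun x => by linarith [hAB x]) j]
  · linarith [le_muNth_of_le_dotProduct hB hA zero_le_one
      (d := - specNorm (A - B)) (fun x => by linarith [hAB x]) j]

theorem muNth_le_muNth_add {A P : Matrix (Fin n) (Fin n) ℝ} (hA : A.IsHermitian)
    (hP : P.PosSemidef) (j : Fin n) : muNth A (j + 1) ≤ muNth (A + P) (j + 1) := by
  have := le_muNth_of_le_dotProduct hA (hA.add hP.isHermitian) zero_le_one (d := 0)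
    (fun x => by simpa [add_mulVec, dotProduct_add] using hP.dotProduct_mulVec_nonneg x) j
  simpa using this

theorem muNth_add_le_add_specNorm {A P : Matrix (Fin n) (Fin n) ℝ} (hA : A.IsHermitian)
    (hP : P.IsHermitian) (j : Fin n) : muNth (A + P) (j + 1) ≤ muNth A (j + 1) + specNorm P := by
  have := muNth_le_of_dotProduct_le hA (hA.add hP) zero_le_one (d := specNorm P)
    (fun x => by
      have := (abs_le.mp (abs_dotProduct_mulVec_le_specNorm P x)).2
      simp only [add_mulVec, dotProduct_add]
      linarith) j
  simpa using this

end muNth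

section Gram

variable {m r : ℕ}

lemma Matrix.posSemidef_transpose_mul_self {ι κ : Type*} [Fintype ι] [Fintype κ]
    (C : Matrix ι κ ℝ) :
    (Cᵀ * C).PosSemidef := by
  simpa [conjTranspose_eq_transpose_of_trivial] using posSemidef_conjTranspose_mul_self C

lemma Matrix.posSemidef_self_mul_transpose {ι κ : Type*} [Fintype ι] [Fintype κ]
    (C : Matrix ι κ ℝ) :
    (C * Cᵀ).PosSemidef := by
  simpa [conjTranspose_eq_transpose_of_trivial] using posSemidef_self_mul_conjTranspose C

lemma Matrix.PosSemidef.mul_mul_transpose_same {ι κ : Type*} [Fintype ι] [Fintype κ]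
    {G : Matrix κ κ ℝ} (hG : G.PosSemidef) (C : Matrix ι κ ℝ) : (C * G * Cᵀ).PosSemidef := by
  simpa [conjTranspose_eq_transpose_of_trivial] using hG.mul_mul_conjTranspose_same C

lemma Matrix.dotProduct_mul_mul_transpose_mulVec {α ι κ : Type*} [CommSemiring α] [Fintype ι]
    [Fintype κ] (C : Matrix ι κ α) (G : Matrix κ κ α) (x : ι → α) :
    x ⬝ᵥ (C * G * Cᵀ) *ᵥ x = (Cᵀ *ᵥ x) ⬝ᵥ G *ᵥ (Cᵀ *ᵥ x) := by
  rw [← mulVec_mulVec, ← mulVec_mulVec, dotProduct_mulVec, ← mulVec_transpose]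

lemma Matrix.dotProduct_mul_transpose_mulVec {α ι κ : Type*} [CommSemiring α] [Fintype ι]
    [Fintype κ] [DecidableEq κ] (C : Matrix ι κ α) (x : ι → α) :
    x ⬝ᵥ (C * Cᵀ) *ᵥ x = (Cᵀ *ᵥ x) ⬝ᵥ (Cᵀ *ᵥ x) := by
  simpa using dotProduct_mul_mul_transpose_mulVec C 1 x

theorem muNth_transpose_mul_self (C : Matrix (Fin m) (Fin r) ℝ) (j : ℕ) (hjr : j < r)
    (hjm : j < m) : muNth (Cᵀ * C) (j + 1) = muNth (C * Cᵀ) (j + 1) := by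
  have hCtC := muNth_succ_eq_eigenvalues (toEuclideanLin C).isSymmetric_adjoint_comp_self
    (toEuclideanLin_transpose_mul_self C) ⟨j, hjr⟩
  have hCCt := muNth_succ_eq_eigenvalues (toEuclideanLin C).isSymmetric_self_comp_adjoint
    (toEuclideanLin_mul_transpose_self C) ⟨j, hjm⟩
  have hCCt' := muNth_succ_eq_eigenvalues (toEuclideanLin Cᵀ).isSymmetric_adjoint_comp_self
    (toEuclideanLin_transpose_mul_self Cᵀ) ⟨j, hjm⟩
  have hCtC' := muNth_succ_eq_eigenvalues (toEuclideanLin Cᵀ).isSymmetric_self_comp_adjoint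
    (toEuclideanLin_mul_transpose_self Cᵀ) ⟨j, hjr⟩
  rw [transpose_transpose] at hCCt' hCtC'
  refine le_antisymm ?_ ?_
  · rw [hCtC, hCCt]
    exact (toEuclideanLin C).eigenvalues_adjoint_comp_self_le finrank_euclideanSpace_fin
      finrank_euclideanSpace_fin j hjr hjm
  · rw [hCCt', hCtC']
    exact (toEuclideanLin Cᵀ).eigenvalues_adjoint_comp_self_le finrank_euclideanSpace_fin
      finrank_euclideanSpace_fin j hjm hjr

theorem muNth_mul_transpose_self_nonpos (C : Matrix (Fin m) (Fin r) ℝ) (j : Fin m)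
    (hj : r ≤ j) : muNth (C * Cᵀ) (j + 1) ≤ 0 := by
  rw [muNth_succ_eq_eigenvalues (toEuclideanLin C).isSymmetric_self_comp_adjoint
    (toEuclideanLin_mul_transpose_self C)]
  exact (toEuclideanLin C).eigenvalues_self_comp_adjoint_nonpos finrank_euclideanSpace_fin
    finrank_euclideanSpace_fin j hj

end Gram

section Rayleigh

variable {m n r : ℕ}

theorem dotProduct_mulVec_le_muNth_one {A : Matrix (Fin n) (Fin n) ℝ} (hA : A.IsHermitian)
    (hn : 0 < n) (x : Fin n → ℝ) : x ⬝ᵥ A *ᵥ x ≤ muNth A 1 * (x ⬝ᵥ x) := by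
  have hT := isSymmetric_toEuclideanLin_iff.mpr hA
  have := hT.inner_apply_self_le_of_forall_lt finrank_euclideanSpace_fin ⟨0, hn⟩
    (x := WithLp.toLp 2 x) fun i hi => absurd (Fin.lt_def.mp hi) (Nat.not_lt_zero _)
  rwa [inner_toEuclideanLin_self, EuclideanSpace.norm_sq_eq_dotProduct,
    ← muNth_succ_eq_eigenvalues hT rfl] at this

theorem muNth_mul_le_dotProduct_mulVec {A : Matrix (Fin n) (Fin n) ℝ} (hA : A.IsHermitian)
    (x : Fin n → ℝ) : muNth A n * (x ⬝ᵥ x) ≤ x ⬝ᵥ A *ᵥ x := by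
  cases n with
  | zero => simp [dotProduct]
  | succ n =>
    have hT := isSymmetric_toEuclideanLin_iff.mpr hA
    have := hT.le_inner_apply_self_of_forall_gt finrank_euclideanSpace_fin (Fin.last n)
      (x := WithLp.toLp 2 x) fun i hi => absurd hi (Fin.le_last i).not_gt
    rwa [inner_toEuclideanLin_self, EuclideanSpace.norm_sq_eq_dotProduct,
      ← muNth_succ_eq_eigenvalues hT rfl] at this

theorem muNth_mul_mul_transpose_le (C : Matrix (Fin m) (Fin r) ℝ)
    {G : Matrix (Fin r) (Fin r) ℝ} (hG : G.PosSemidef) (hr : 0 < r) (j : Fin m) :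
    muNth (C * G * Cᵀ) (j + 1) ≤ muNth G 1 * muNth (C * Cᵀ) (j + 1) := by
  simpa using muNth_le_of_dotProduct_le (posSemidef_self_mul_transpose C).isHermitian
    (hG.mul_mul_transpose_same C).isHermitian (muNth_nonneg_of_posSemidef hG ⟨0, hr⟩) (d := 0)
    (fun x => by
      rw [dotProduct_mul_mul_transpose_mulVec, dotProduct_mul_transpose_mulVec, zero_mul,
        add_zero]
      exact dotProduct_mulVec_le_muNth_one hG.isHermitian hr _) j

theorem le_muNth_mul_mul_transpose (C : Matrix (Fin m) (Fin r) ℝ)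
    {X : Matrix (Fin r) (Fin r) ℝ} (hX : X.PosSemidef) (hr : 0 < r) (j : Fin m) :
    muNth X r * muNth (C * Cᵀ) (j + 1) ≤ muNth (C * X * Cᵀ) (j + 1) := by
  have hXr : 0 ≤ muNth X r := by
    simpa [Nat.sub_add_cancel hr] using muNth_nonneg_of_posSemidef hX ⟨r - 1, by omega⟩
  simpa using le_muNth_of_le_dotProduct (posSemidef_self_mul_transpose C).isHermitian
    (hX.mul_mul_transpose_same C).isHermitian hXr (d := 0)
    (fun x => by
      rw [dotProduct_mul_mul_transpose_mulVec, dotProduct_mul_transpose_mulVec, zero_mul,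
        add_zero]
      exact muNth_mul_le_dotProduct_mulVec hX.isHermitian _) j

end Rayleigh

section FactorModel

open scoped MatrixOrder

variable {n r : ℕ}

lemma Matrix.PosSemidef.exists_eq_transpose_mul_self {G : Matrix (Fin r) (Fin r) ℝ}
    (hG : G.PosSemidef) : ∃ B : Matrix (Fin r) (Fin r) ℝ, G = Bᵀ * B := by
  obtain ⟨B, hB⟩ := CStarAlgebra.nonneg_iff_eq_star_mul_self.mp hG.nonneg
  exact ⟨B, by rwa [star_eq_conjTranspose, conjTranspose_eq_transpose_of_trivial] at hB⟩

theorem le_muNth_mul_mul_transpose_add (Λ : Matrix (Fin n) (Fin r) ℝ)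
    {G : Matrix (Fin r) (Fin r) ℝ} {Ξ : Matrix (Fin n) (Fin n) ℝ} (hG : G.PosSemidef)
    (hΞ : Ξ.PosSemidef) (j : Fin r) (hjn : (j : ℕ) < n) :
    muNth (Λᵀ * Λ) r * muNth G (j + 1) ≤ muNth (Λ * G * Λᵀ + Ξ) (j + 1) := by
  obtain ⟨B, rfl⟩ := hG.exists_eq_transpose_mul_self
  set C := Λ * Bᵀ
  have hCCt : Λ * (Bᵀ * B) * Λᵀ = C * Cᵀ := by
    simp only [C, transpose_mul, transpose_transpose, Matrix.mul_assoc]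
  have hCtC : Cᵀ * C = B * (Λᵀ * Λ) * Bᵀ := by
    simp only [C, transpose_mul, transpose_transpose, Matrix.mul_assoc]
  calc muNth (Λᵀ * Λ) r * muNth (Bᵀ * B) (j + 1)
      = muNth (Λᵀ * Λ) r * muNth (B * Bᵀ) (j + 1) := by rw [muNth_transpose_mul_self B j j.2 j.2]
    _ ≤ muNth (B * (Λᵀ * Λ) * Bᵀ) (j + 1) :=
        le_muNth_mul_mul_transpose B (posSemidef_transpose_mul_self Λ) j.pos j
    _ = muNth (C * Cᵀ) (j + 1) := by rw [← hCtC, muNth_transpose_mul_self C j j.2 hjn]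
    _ ≤ muNth (Λ * (Bᵀ * B) * Λᵀ + Ξ) (j + 1) := by
        rw [hCCt]
        exact muNth_le_muNth_add (posSemidef_self_mul_transpose C).isHermitian hΞ ⟨j, hjn⟩

theorem muNth_mul_mul_transpose_add_le (Λ : Matrix (Fin n) (Fin r) ℝ)
    {G : Matrix (Fin r) (Fin r) ℝ} {Ξ : Matrix (Fin n) (Fin n) ℝ} (hG : G.PosSemidef)
    (hΞ : Ξ.IsHermitian) (j : Fin r) (hjn : (j : ℕ) < n) :
    muNth (Λ * G * Λᵀ + Ξ) (j + 1) ≤ muNth (Λᵀ * Λ) (j + 1) * muNth G 1 + specNorm Ξ := by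
  calc muNth (Λ * G * Λᵀ + Ξ) (j + 1)
      ≤ muNth (Λ * G * Λᵀ) (j + 1) + specNorm Ξ :=
        muNth_add_le_add_specNorm (hG.mul_mul_transpose_same Λ).isHermitian hΞ ⟨j, hjn⟩
    _ ≤ muNth G 1 * muNth (Λ * Λᵀ) (j + 1) + specNorm Ξ := by
        gcongr
        exact muNth_mul_mul_transpose_le Λ hG j.pos ⟨j, hjn⟩
    _ = muNth (Λᵀ * Λ) (j + 1) * muNth G 1 + specNorm Ξ := by
        rw [muNth_transpose_mul_self Λ j j.2 hjn, mul_comm]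

theorem muNth_mul_mul_transpose_add_succ_le (Λ : Matrix (Fin n) (Fin r) ℝ)
    {G : Matrix (Fin r) (Fin r) ℝ} {Ξ : Matrix (Fin n) (Fin n) ℝ} (hG : G.PosSemidef)
    (hΞ : Ξ.IsHermitian) (hrn : r < n) : muNth (Λ * G * Λᵀ + Ξ) (r + 1) ≤ specNorm Ξ := by
  obtain ⟨B, rfl⟩ := hG.exists_eq_transpose_mul_self
  set C := Λ * Bᵀ
  have hCCt : Λ * (Bᵀ * B) * Λᵀ = C * Cᵀ := by
    simp only [C, transpose_mul, transpose_transpose, Matrix.mul_assoc]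
  rw [hCCt]
  linarith [muNth_add_le_add_specNorm (posSemidef_self_mul_transpose C).isHermitian hΞ ⟨r, hrn⟩,
    muNth_mul_transpose_self_nonpos C ⟨r, hrn⟩ le_rfl]

end FactorModel

theorem Filter.le_liminf_and_limsup_le_of_tendsto {α : Type*} {l : Filter α} [l.NeBot]
    {f g h : α → ℝ} {a b : ℝ} (hg : Tendsto g l (nhds a)) (hh : Tendsto h l (nhds b))
    (hgf : ∀ᶠ x in l, g x ≤ f x) (hfh : ∀ᶠ x in l, f x ≤ h x) :
    a ≤ liminf f l ∧ limsup f l ≤ b := by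
  have hf_le : IsBoundedUnder (· ≤ ·) l f := hh.isBoundedUnder_le.mono_le hfh
  have hf_ge : IsBoundedUnder (· ≥ ·) l f := hg.isBoundedUnder_ge.mono_ge hgf
  exact ⟨hg.liminf_eq ▸ liminf_le_liminf hgf hg.isBoundedUnder_ge hf_le.isCoboundedUnder_ge,
    hh.limsup_eq ▸ limsup_le_limsup hfh hf_ge.isCoboundedUnder_le hh.isBoundedUnder_le⟩

theorem tendsto_muNth_of_tendsto_specNorm {r : ℕ} {A : ℕ → Matrix (Fin r) (Fin r) ℝ}
    {S : Matrix (Fin r) (Fin r) ℝ} (hA : ∀ n, (A n).IsHermitian) (hS : S.IsHermitian)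
    (h : Tendsto (fun n => specNorm (A n - S)) atTop (nhds 0)) (k : Fin r) :
    Tendsto (fun n => muNth (A n) (k + 1)) atTop (nhds (muNth S (k + 1))) := by
  rw [tendsto_iff_norm_sub_tendsto_zero]
  exact squeeze_zero (fun _ => norm_nonneg _)
    (fun n => abs_muNth_sub_le_specNorm (hA n) hS k) h

theorem observable_covariance_eigengap_general
    (r : ℕ)
    (SigmaL GammaF : Matrix (Fin r) (Fin r) ℝ)
    (hSigmaL : SigmaL.PosDef) (hGammaF : GammaF.PosDef)
    (Lam : (n : ℕ) → Matrix (Fin n) (Fin r) ℝ)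
    (GammaXi : (n : ℕ) → Matrix (Fin n) (Fin n) ℝ)
    (hXi : ∀ n, (GammaXi n).PosSemidef)
    (M : ℝ) (hXinorm : ∀ n, specNorm (GammaXi n) ≤ M)
    (hconv : Tendsto (fun n : ℕ => specNorm ((n : ℝ)⁻¹ • ((Lam n)ᵀ * Lam n) - SigmaL))
      atTop (nhds 0)) :
    (∀ j : Fin r,
      0 < muNth SigmaL r * muNth GammaF ((j : ℕ) + 1) ∧
      muNth SigmaL r * muNth GammaF ((j : ℕ) + 1) ≤
        atTop.liminf
          (fun n : ℕ => muNth (Lam n * GammaF * (Lam n)ᵀ + GammaXi n) ((j : ℕ) + 1) / n) ∧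
      atTop.limsup
          (fun n : ℕ => muNth (Lam n * GammaF * (Lam n)ᵀ + GammaXi n) ((j : ℕ) + 1) / n) ≤
        muNth SigmaL ((j : ℕ) + 1) * muNth GammaF 1) ∧
    ∀ n : ℕ, r < n → muNth (Lam n * GammaF * (Lam n)ᵀ + GammaXi n) (r + 1) ≤ M := by
  have hG := hGammaF.posSemidef
  have hX (n : ℕ) := posSemidef_transpose_mul_self (Lam n)
  refine ⟨fun j => ?_, fun n hrn =>
    (muNth_mul_mul_transpose_add_succ_le (Lam n) hG (hXi n).isHermitian hrn).trans (hXinorm n)⟩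
  -- with `r + 1` in place of `r`, `μ_r` is the eigenvalue at index `Fin.last r`
  obtain ⟨r, rfl⟩ := Nat.exists_eq_add_one_of_ne_zero j.pos.ne'
  have hlim (k : Fin (r + 1)) : Tendsto (fun n : ℕ => muNth ((Lam n)ᵀ * Lam n) (k + 1) / n)
      atTop (nhds (muNth SigmaL (k + 1))) := by
    refine (tendsto_muNth_of_tendsto_specNorm
      (fun n => (hX n).isHermitian.smul (IsSelfAdjoint.all _)) hSigmaL.isHermitian hconv k).congr
      fun n => ?_
    rw [muNth_smul (hX n).isHermitian (by positivity), inv_mul_eq_div]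
  have hlower := (hlim (Fin.last r)).mul_const (muNth GammaF (j + 1))
  have hupper := ((hlim j).mul_const (muNth GammaF 1)).add
    (tendsto_const_div_atTop_nhds_zero_nat M)
  rw [add_zero] at hupper
  refine ⟨mul_pos (muNth_pos_of_posDef hSigmaL (Fin.last r)) (muNth_pos_of_posDef hGammaF j),
    le_liminf_and_limsup_le_of_tendsto hlower hupper ?_ ?_⟩
  · filter_upwards [eventually_gt_atTop (r + 1)] with n hn
    rw [div_mul_eq_mul_div]
    gcongr
    exact le_muNth_mul_mul_transpose_add (Lam n) hG (hXi n) j (by omega)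
  · filter_upwards [eventually_gt_atTop (r + 1)] with n hn
    rw [div_mul_eq_mul_div, ← add_div]
    gcongr
    linarith [muNth_mul_mul_transpose_add_le (Lam n) hG (hXi n).isHermitian j (by omega),
      hXinorm n]

/-- Lemma C.1(vi): the eigengap of `Γ^x = Λ Γ^F Λᵀ + Γ^ξ`; its `r` largest eigenvalues
diverge linearly in `n` while the `(r+1)`-th stays bounded by `M`. -/
theorem observable_covariance_eigengap
    (r : ℕ) (hr : 1 ≤ r)
    (SigmaL GammaF : Matrix (Fin r) (Fin r) ℝ)
    (hSigmaL : SigmaL.PosDef) (hGammaF : GammaF.PosDef)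
    (Lam : (n : ℕ) → Matrix (Fin n) (Fin r) ℝ)
    (GammaXi : (n : ℕ) → Matrix (Fin n) (Fin n) ℝ)
    (hXi : ∀ n, (GammaXi n).PosSemidef)
    (M : ℝ) (hM : 0 < M) (hXinorm : ∀ n, specNorm (GammaXi n) ≤ M)
    (hconv : Tendsto (fun n : ℕ => specNorm ((n : ℝ)⁻¹ • ((Lam n)ᵀ * Lam n) - SigmaL))
      atTop (nhds 0)) :
    (∀ j : Fin r,
      0 < muNth SigmaL r * muNth GammaF ((j : ℕ) + 1) ∧
      muNth SigmaL r * muNth GammaF ((j : ℕ) + 1) ≤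
        atTop.liminf
          (fun n : ℕ => muNth (Lam n * GammaF * (Lam n)ᵀ + GammaXi n) ((j : ℕ) + 1) / n) ∧
      atTop.limsup
          (fun n : ℕ => muNth (Lam n * GammaF * (Lam n)ᵀ + GammaXi n) ((j : ℕ) + 1) / n) ≤
        muNth SigmaL ((j : ℕ) + 1) * muNth GammaF 1) ∧
    ∀ n : ℕ, r < n → muNth (Lam n * GammaF * (Lam n)ᵀ + GammaXi n) (r + 1) ≤ M :=
  observable_covariance_eigengap_general r SigmaL GammaF hSigmaL hGammaF Lam GammaXi hXi M hXinorm
    hconv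
end

section
/- Let (Ω, 𝓕, ℙ) be a probability space, let T, r ≥ 1 be integers, fix an index i, and let F_{jt} : Ω → ℝ (j = 1,…,r; t = 1,…,T) and ξ_{it} : Ω → ℝ (t = 1,…,T) be random variables with all fourth-order products integrable. Suppose: (a) E[ξ_{it} F_{jt} ξ_{is} F_{js}] = E[F_{jt} F_{js}] · E[ξ_{it} ξ_{is}] for all j, t, s; (b) |E[F_{jt} F_{js}]| ≤ M_F for all j, t, s; (c) ∑_{t=1}^T ∑_{s=1}^T |E[ξ_{it} ξ_{is}]| ≤ T · M₃. Then, writing F_t = (F_{1t},…,F_{rt})ᵀ ∈ ℝ^r, E[ ‖ (1/T) ∑_{t=1}^T ξ_{it} F_t ‖² ] ≤ r M_F M₃ / T, where ‖·‖ is the Euclidean norm on ℝ^r. -/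
/-!
Expanding the square, `E[(∑_t ξ_t F_{jt})²] = ∑_{t,s} E[ξ_t F_{jt} ξ_s F_{js}]`; the
factorization turns each term into `E[F_{jt}F_{js}] E[ξ_tξ_s]`, which is at most
`M_F |E[ξ_tξ_s]|`, so each factor contributes at most `M_F · T M₃`. Summing over the `r`
factors and the prefactor `T⁻²` gives `r M_F M₃ / T`.
-/

open MeasureTheory Finset

theorem Finset.sum_mul_le_mul_sum_abs {ι R : Type*} [CommRing R] [LinearOrder R]
    [IsStrictOrderedRing R] (s : Finset ι) {a b : ι → R} {M : R} (ha : ∀ i ∈ s, |a i| ≤ M) :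
    ∑ i ∈ s, a i * b i ≤ M * ∑ i ∈ s, |b i| := by
  rw [mul_sum]
  refine sum_le_sum fun i hi => ?_
  calc a i * b i ≤ |a i| * |b i| := (le_abs_self _).trans (abs_mul _ _).le
    _ ≤ M * |b i| := mul_le_mul_of_nonneg_right (ha i hi) (abs_nonneg _)

section SquareOfSum

variable {Ω ι : Type*} [MeasurableSpace Ω] {μ : Measure Ω} (s : Finset ι) {X : ι → Ω → ℝ}

theorem integrable_sq_sum (hX : ∀ t ∈ s, ∀ u ∈ s, Integrable (fun ω => X t ω * X u ω) μ) :
    Integrable (fun ω => (∑ t ∈ s, X t ω) ^ 2) μ := by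
  simp_rw [sq, sum_mul_sum]
  exact integrable_finsetSum _ fun t ht => integrable_finsetSum _ (hX t ht)

theorem integral_sq_sum (hX : ∀ t ∈ s, ∀ u ∈ s, Integrable (fun ω => X t ω * X u ω) μ) :
    ∫ ω, (∑ t ∈ s, X t ω) ^ 2 ∂μ = ∑ t ∈ s, ∑ u ∈ s, ∫ ω, X t ω * X u ω ∂μ := by
  simp_rw [sq, sum_mul_sum]
  rw [integral_finsetSum _ fun t ht => integrable_finsetSum _ (hX t ht)]
  exact sum_congr rfl fun t ht => integral_finsetSum _ (hX t ht)

end SquareOfSum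

theorem integral_sq_sum_mul_le_of_factorization {Ω ι : Type*} [MeasurableSpace Ω]
    {μ : Measure Ω} [Fintype ι] [Nonempty ι] {f ξ : ι → Ω → ℝ}
    (hint : ∀ t ∈ univ, ∀ s ∈ univ, Integrable (fun ω => ξ t ω * f t ω * (ξ s ω * f s ω)) μ)
    (hfact : ∀ t s, ∫ ω, ξ t ω * f t ω * ξ s ω * f s ω ∂μ =
      (∫ ω, f t ω * f s ω ∂μ) * (∫ ω, ξ t ω * ξ s ω ∂μ))
    {M C : ℝ} (hf : ∀ t s, |∫ ω, f t ω * f s ω ∂μ| ≤ M)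
    (hξ : ∑ t, ∑ s, |∫ ω, ξ t ω * ξ s ω ∂μ| ≤ C) :
    ∫ ω, (∑ t, ξ t ω * f t ω) ^ 2 ∂μ ≤ M * C := by
  have hM : 0 ≤ M := (abs_nonneg _).trans (hf (Classical.arbitrary ι) (Classical.arbitrary ι))
  calc ∫ ω, (∑ t, ξ t ω * f t ω) ^ 2 ∂μ
      = ∑ t, ∑ s, (∫ ω, f t ω * f s ω ∂μ) * (∫ ω, ξ t ω * ξ s ω ∂μ) := by
        simp only [integral_sq_sum univ hint, ← hfact, mul_assoc]
    _ ≤ M * ∑ t, ∑ s, |∫ ω, ξ t ω * ξ s ω ∂μ| := by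
        rw [mul_sum]
        exact sum_le_sum fun t _ => sum_mul_le_mul_sum_abs univ fun s _ => hf t s
    _ ≤ M * C := mul_le_mul_of_nonneg_left hξ hM

theorem single_series_factor_cross_term_bound_general
    (Ω : Type*) [MeasurableSpace Ω] (P : Measure Ω)
    (T r : ℕ) (hT : 1 ≤ T)
    (F : Fin r → Fin T → Ω → ℝ) (ξ : Fin T → Ω → ℝ)
    (hint4 : ∀ (j k : Fin r) (t s : Fin T),
      Integrable (fun ω => ξ t ω * F j t ω * ξ s ω * F k s ω) P)
    (hfact : ∀ (j : Fin r) (t s : Fin T),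
      ∫ ω, ξ t ω * F j t ω * ξ s ω * F j s ω ∂P =
        (∫ ω, F j t ω * F j s ω ∂P) * (∫ ω, ξ t ω * ξ s ω ∂P))
    (M_F : ℝ) (hMF : ∀ (j : Fin r) (t s : Fin T), |∫ ω, F j t ω * F j s ω ∂P| ≤ M_F)
    (M₃ : ℝ) (hM3 : ∑ t, ∑ s, |∫ ω, ξ t ω * ξ s ω ∂P| ≤ (T : ℝ) * M₃) :
    ∫ ω, ∑ j, ((T : ℝ)⁻¹ * ∑ t, ξ t ω * F j t ω) ^ 2 ∂P
      ≤ (r : ℝ) * M_F * M₃ / T := by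
  have : Nonempty (Fin T) := ⟨⟨0, hT⟩⟩
  have hpair (j : Fin r) : ∀ t ∈ univ, ∀ s ∈ univ,
      Integrable (fun ω => ξ t ω * F j t ω * (ξ s ω * F j s ω)) P := fun t _ s _ => by
    simpa only [mul_assoc] using hint4 j j t s
  simp_rw [mul_pow, ← mul_sum]
  rw [integral_const_mul, integral_finsetSum _ fun j _ => integrable_sq_sum univ (hpair j)]
  calc ((T : ℝ)⁻¹) ^ 2 * ∑ j, ∫ ω, (∑ t, ξ t ω * F j t ω) ^ 2 ∂P
      ≤ ((T : ℝ)⁻¹) ^ 2 * ∑ _j : Fin r, M_F * (T * M₃) := by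
        gcongr with j
        exact integral_sq_sum_mul_le_of_factorization (hpair j) (hfact j) (hMF j) hM3
    _ = (r : ℝ) * M_F * M₃ / T := by
        rw [sum_const, card_univ, Fintype.card_fin, nsmul_eq_mul]
        field_simp

/-- Equation (A.1b3) in the proof of Proposition B.3(b): for a fixed series `i`, under
the factorization `E[ξ_{it} F_{jt} ξ_{is} F_{js}] = E[F_{jt}F_{js}] E[ξ_{it}ξ_{is}]`,
bounded factor second moments `|E[F_{jt}F_{js}]| ≤ M_F`, and summable idiosyncratic
autocovariances `∑_{t,s} |E[ξ_{it}ξ_{is}]| ≤ T M₃`, the factor–idiosyncratic cross term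
satisfies `E[‖(1/T) ∑_t ξ_{it} F_t‖²] ≤ r M_F M₃ / T` (Euclidean norm on ℝ^r). -/
theorem single_series_factor_cross_term_bound
    (Ω : Type*) [MeasurableSpace Ω] (P : Measure Ω) [IsProbabilityMeasure P]
    (T r : ℕ) (hT : 1 ≤ T) (hr : 1 ≤ r)
    (F : Fin r → Fin T → Ω → ℝ) (ξ : Fin T → Ω → ℝ)
    (hint4 : ∀ (j k : Fin r) (t s : Fin T),
      Integrable (fun ω => ξ t ω * F j t ω * ξ s ω * F k s ω) P)
    (hintF : ∀ (j k : Fin r) (t s : Fin T), Integrable (fun ω => F j t ω * F k s ω) P)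
    (hintXi : ∀ t s : Fin T, Integrable (fun ω => ξ t ω * ξ s ω) P)
    (hfact : ∀ (j : Fin r) (t s : Fin T),
      ∫ ω, ξ t ω * F j t ω * ξ s ω * F j s ω ∂P =
        (∫ ω, F j t ω * F j s ω ∂P) * (∫ ω, ξ t ω * ξ s ω ∂P))
    (M_F : ℝ) (hMF : ∀ (j : Fin r) (t s : Fin T), |∫ ω, F j t ω * F j s ω ∂P| ≤ M_F)
    (M₃ : ℝ) (hM3 : ∑ t, ∑ s, |∫ ω, ξ t ω * ξ s ω ∂P| ≤ (T : ℝ) * M₃) :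
    ∫ ω, ∑ j, ((T : ℝ)⁻¹ * ∑ t, ξ t ω * F j t ω) ^ 2 ∂P
      ≤ (r : ℝ) * M_F * M₃ / T :=
  single_series_factor_cross_term_bound_general Ω P T r hT F ξ hint4 hfact M_F hMF M₃ hM3
end
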